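/- arXiv:1008.2583 — 4 statements merged into one kernel-verified Lean document; each statement's English description precedes it below -/
import Mathlib

section
/- For every even integer k > 2 and every integer n > 2k, the independence number of the generalized Petersen graph satisfies α(P(n,k)) ≤ ⌊(2k−1)n/(2k)⌋. -/
/-!
Call column `i` empty when neither `u_i` nor `v_i` lies in the independent set `S`; since
`u_i v_i` is an edge, `|S| = n - #empty`, so it suffices that `n ≤ 2k · #empty`. Write `k = 2m`
and read the columns on `ℤ`. In a run of `4m` consecutive nonempty columns the edges
`u_i u_{i+1}` and `v_i v_{i+2m}` determine `S` completely; the column after the run is empty, and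
no `v` is chosen at offsets `2, 4, …, 2m - 2` past it. From an empty column with this property
the next run is shorter than `4m`, or has length `4m - 1` and passes the property on. So with
`φ(e) = 1` when `e` has the property and `0` otherwise, consecutive empty columns `e < e'`
satisfy `e' - e ≤ 4m + φ(e') - φ(e)`, and summing over one period gives `n ≤ 4m · #empty`.
-/

namespace GP

/-- Adjacency generating relation for the generalized Petersen graph `P(n,k)`:
`Sum.inl i` is the outer vertex `u_i`, `Sum.inr i` is the inner vertex `v_i`. -/
def adjFun (n k : ℕ) : (ZMod n ⊕ ZMod n) → (ZMod n ⊕ ZMod n) → Prop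
  | Sum.inl i, Sum.inl j => j = i + 1
  | Sum.inl i, Sum.inr j => j = i
  | Sum.inr i, Sum.inr j => j = i + (k : ZMod n)
  | _, _ => False

/-- The generalized Petersen graph `P(n,k)`. -/
def P (n k : ℕ) : SimpleGraph (ZMod n ⊕ ZMod n) :=
  SimpleGraph.fromRel (adjFun n k)

/-- `s` is an independent set of vertices in `G`. -/
def IsIndep {V : Type*} (G : SimpleGraph V) (s : Finset V) : Prop :=
  ∀ v ∈ s, ∀ w ∈ s, ¬ G.Adj v w

/-- The independence number of a graph. -/
noncomputable def indepNum {V : Type*} (G : SimpleGraph V) : ℕ :=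
  sSup {m | ∃ s : Finset V, IsIndep G s ∧ s.card = m}

/-- `α(P(n,k))`. -/
noncomputable def alpha (n k : ℕ) : ℕ := indepNum (P n k)

/-- The outer vertex `u_i`. -/
def u (n : ℕ) (i : ZMod n) : ZMod n ⊕ ZMod n := Sum.inl i

/-- The inner vertex `v_i`. -/
def v (n : ℕ) (i : ZMod n) : ZMod n ⊕ ZMod n := Sum.inr i

/-- The `2k`-segment `I_t = {u_t, …, u_{t+2k-1}} ∪ {v_t, …, v_{t+2k-1}}`. -/
def segment (n k : ℕ) (t : ZMod n) : Finset (ZMod n ⊕ ZMod n) :=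
  ((Finset.range (2*k)).image fun j : ℕ => u n (t + (j : ZMod n))) ∪
  ((Finset.range (2*k)).image fun j : ℕ => v n (t + (j : ZMod n)))

/-- The edges of `P(n, 2m)` unrolled from `ZMod n` to `ℤ`, where `U i` and `V i` say that `u_i`
and `v_i` are chosen. -/
structure IsIndepLift (U V : ℤ → Prop) (m : ℕ) : Prop where
  not_U_succ : ∀ i, U i → ¬ U (i + 1)
  not_V_add : ∀ i, V i → ¬ V (i + 2 * m)
  not_U_and_V : ∀ i, U i → ¬ V i

def Run (U V : ℤ → Prop) (a b : ℤ) : Prop := ∀ x, a ≤ x → x < b → U x ∨ V x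

def OddFree (V : ℤ → Prop) (m : ℕ) (s : ℤ) : Prop :=
  ∀ i : ℕ, i + 1 < m → ¬ V (s + 2 * i + 1)

open Classical in
noncomputable def potential (V : ℤ → Prop) (m : ℕ) (e : ℤ) : ℤ :=
  if OddFree V m (e + 1) then 1 else 0

open Classical in
noncomputable def emptyInd {ι : Type*} (U V : ι → Prop) (x : ι) : ℤ :=
  if U x ∨ V x then 0 else 1

section Lift

variable {U V : ℤ → Prop} {m : ℕ} {a b x y s : ℤ}

theorem Run.mono (h : Run U V a b) {a' b' : ℤ} (ha : a ≤ a') (hb : b' ≤ b) : Run U V a' b' :=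
  fun x h₁ h₂ => h x (ha.trans h₁) (h₂.trans_le hb)

theorem potential_nonneg (e : ℤ) : 0 ≤ potential V m e := by
  unfold potential; split_ifs <;> omega

theorem potential_periodic {n : ℤ} (hV : Function.Periodic V n) :
    Function.Periodic (potential V m) n := fun e => by
  have : OddFree V m (e + n + 1) ↔ OddFree V m (e + 1) :=
    forall₂_congr fun i _ => by
      rw [show e + n + 1 + 2 * i + 1 = e + 1 + 2 * i + 1 + n by ring, hV]
  simp only [potential]
  congr 1
  exact propext this

namespace IsIndepLift

variable (h : IsIndepLift U V m)
include h

theorem add_one_ne_of_U (hx : U x) (hy : U y) : y ≠ x + 1 :=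
  fun hxy => h.not_U_succ x hx (hxy ▸ hy)

theorem add_two_mul_ne_of_V (hx : V x) (hy : V y) : y ≠ x + 2 * m :=
  fun hxy => h.not_V_add x hx (hxy ▸ hy)

theorem V_or_V_succ (hrun : Run U V a b) (ha : a ≤ x) (hb : x + 1 < b) : V x ∨ V (x + 1) := by
  rcases hrun x ha (by omega) with hU | hV
  · exact Or.inr <|
      (hrun (x + 1) (by omega) hb).resolve_left fun hU' => h.add_one_ne_of_U hU hU' rfl
  · exact Or.inl hV

theorem V_add_two (hx : V x) (hrun : Run U V (x + 1) (x + 2 * m + 2)) : V (x + 2) := by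
  obtain rfl | hm := Nat.eq_zero_or_pos m
  · exact (h.add_two_mul_ne_of_V hx hx (by simp)).elim
  have hfar : V (x + 2 * m + 1) :=
    (h.V_or_V_succ hrun (by omega) (by omega)).resolve_left
      fun hV => h.add_two_mul_ne_of_V hx hV rfl
  rw [show x + 2 = x + 1 + 1 by ring]
  exact (h.V_or_V_succ hrun le_rfl (by omega)).resolve_left
    fun hV => h.add_two_mul_ne_of_V hV hfar (by ring)

theorem V_add_two_mul (hx : V x) (i : ℕ) (hrun : Run U V (x + 1) (x + 2 * i + 2 * m)) :
    V (x + 2 * i) := by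
  induction i with
  | zero => simpa using hx
  | succ i ih =>
    have hV := ih (hrun.mono le_rfl (by push_cast; omega))
    have := h.V_add_two hV (hrun.mono (by omega) (by push_cast; omega))
    rwa [show x + 2 * i + 2 = x + 2 * ↑(i + 1) by push_cast; ring] at this

section FullRun

variable (hrun : Run U V a (a + 4 * m))
include hrun

theorem not_V_of_run : ¬ V a := fun ha =>
  h.add_two_mul_ne_of_V ha (h.V_add_two_mul ha m (hrun.mono (by omega) (by omega))) (by ring)

theorem V_odd_of_run {j : ℕ} (hj : j < m) : V (a + 2 * j + 1) := by
  have h1 : V (a + 1) := (h.V_or_V_succ hrun le_rfl (by omega)).resolve_left (h.not_V_of_run hrun)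
  have := h.V_add_two_mul h1 j (hrun.mono (by omega) (by omega))
  rwa [show a + 1 + 2 * j = a + 2 * j + 1 by ring] at this

theorem V_second_half_of_run {j : ℕ} (hj : j < m) : V (a + 2 * m + 2 * j) :=
  (h.V_or_V_succ hrun (by omega) (by omega)).resolve_right
    fun hV => h.add_two_mul_ne_of_V (h.V_odd_of_run hrun hj) hV (by ring)

theorem not_occ_after_run (hm : 0 < m) : ¬ (U (a + 4 * m) ∨ V (a + 4 * m)) := by
  have hU : U (a + 4 * m - 1) := by
    refine (hrun _ (by omega) (by omega)).resolve_right fun hV => ?_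
    exact h.add_two_mul_ne_of_V (h.V_odd_of_run hrun (j := m - 1) (by omega)) hV (by omega)
  rintro (hU' | hV')
  · exact h.add_one_ne_of_U hU hU' (by ring)
  · exact h.add_two_mul_ne_of_V (h.V_second_half_of_run hrun (j := 0) hm) hV' (by ring)

theorem oddFree_after_run : OddFree V m (a + 4 * m + 1) := fun i hi hV =>
  h.add_two_mul_ne_of_V (h.V_second_half_of_run hrun (j := i + 1) hi) hV (by push_cast; ring)

end FullRun

section OddFreeRun

variable (hm : 2 ≤ m) (hA : OddFree V m s)
include hm hA

theorem V_even_of_oddFree (hrun : Run U V s (s + 2 * m - 1)) {j : ℕ} (hj : j < m) :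
    V (s + 2 * j) := by
  refine (hrun _ (by omega) (by omega)).resolve_left fun hU => ?_
  have hodd (i : ℕ) (hi : i + 1 < m) : U (s + 2 * i + 1) :=
    (hrun _ (by omega) (by omega)).resolve_right (hA i hi)
  rcases Nat.lt_or_ge (j + 1) m with hj' | hj'
  · exact h.add_one_ne_of_U hU (hodd j hj') rfl
  · exact h.add_one_ne_of_U (hodd (j - 1) (by omega)) hU (by omega)

theorem U_second_half_of_oddFree (hrun : Run U V s (s + 4 * m - 1)) {j : ℕ} (hj : j < m) :
    U (s + 2 * m + 2 * j) :=
  (hrun _ (by omega) (by omega)).resolve_right fun hV =>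
    h.add_two_mul_ne_of_V (h.V_even_of_oddFree hm hA (hrun.mono le_rfl (by omega)) hj) hV (by ring)

theorem V_second_half_odd_of_oddFree (hrun : Run U V s (s + 4 * m - 1)) {j : ℕ} (hj : j + 1 < m) :
    V (s + 2 * m + 2 * j + 1) :=
  (hrun _ (by omega) (by omega)).resolve_left fun hU =>
    h.add_one_ne_of_U (h.U_second_half_of_oddFree hm hA hrun (j := j) (by omega)) hU rfl

theorem not_run_of_oddFree : ¬ Run U V s (s + 4 * m) := fun hrun => by
  have hrun' := hrun.mono le_rfl (by omega : s + 4 * m - 1 ≤ s + 4 * m)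
  have hfirst : U (s + 2 * m + 2 * ↑(0 : ℕ)) :=
    h.U_second_half_of_oddFree hm hA hrun' (by omega)
  have hlast : U (s + 2 * m + 2 * ↑(m - 1)) :=
    h.U_second_half_of_oddFree hm hA hrun' (by omega)
  have hV₁ : V (s + 2 * m - 1) := (hrun _ (by omega) (by omega)).resolve_left
    fun hU => h.add_one_ne_of_U hU hfirst (by push_cast; ring)
  have hV₂ : V (s + 4 * m - 1) := (hrun _ (by omega) (by omega)).resolve_left
    fun hU => h.add_one_ne_of_U hlast hU (by omega)
  exact h.add_two_mul_ne_of_V hV₁ hV₂ (by ring)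

theorem oddFree_add_of_oddFree (hrun : Run U V s (s + 4 * m - 1)) : OddFree V m (s + 4 * m) :=
  fun i hi hV => h.add_two_mul_ne_of_V (h.V_second_half_odd_of_oddFree hm hA hrun hi) hV (by ring)

end OddFreeRun

theorem gap_add_potential_le (hm : 2 ≤ m) {e e' : ℤ}
    (hrun : Run U V (e + 1) e') : e' - e + potential V m e ≤ 4 * m + potential V m e' := by
  have := potential_nonneg (V := V) (m := m) e'
  by_cases hA : OddFree V m (e + 1)
  · have hle : e' ≤ e + 4 * m := by
      by_contra! hgt
      exact h.not_run_of_oddFree hm hA (hrun.mono le_rfl (by omega))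
    rw [potential, if_pos hA]
    obtain hlt' | rfl := hle.lt_or_eq
    · omega
    · have hA' := h.oddFree_add_of_oddFree hm hA (hrun.mono le_rfl (by omega))
      rw [potential, if_pos (by rwa [show e + 4 * m + 1 = e + 1 + 4 * m by ring])]
      omega
  · have hle : e' ≤ e + 4 * m + 1 := by
      by_contra! hgt
      refine h.not_occ_after_run (hrun.mono le_rfl (by omega)) (by omega) ?_
      exact hrun _ (by omega) (by omega)
    rw [potential, if_neg hA]
    obtain hlt' | rfl := hle.lt_or_eq
    · omega
    · have hA' := h.oddFree_after_run (hrun.mono le_rfl (by omega))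
      rw [potential, if_pos (by rwa [show e + 4 * m + 1 + 1 = e + 1 + 4 * m + 1 by ring])]
      omega

theorem exists_run_potential_bound (hm : 2 ≤ m) (e : ℤ) (t : ℕ) :
    ∃ y ≤ e + t, Run U V (y + 1) (e + t + 1) ∧
      y - e + potential V m e ≤ 4 * m * ∑ j ∈ Finset.range t, emptyInd U V (e + j + 1) +
        potential V m y := by
  induction t with
  | zero => exact ⟨e, by simp, fun x _ _ => by omega, by simp⟩
  | succ t ih =>
    obtain ⟨y, hyt, hrun, hbound⟩ := ih
    rw [Finset.sum_range_succ]
    by_cases hx : U (e + t + 1) ∨ V (e + t + 1)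
    · refine ⟨y, by omega, fun z h₁ h₂ => ?_, ?_⟩
      · rcases (by omega : z < e + t + 1 ∨ z = e + t + 1) with hz | rfl
        · exact hrun z h₁ hz
        · exact hx
      · rw [show emptyInd U V (e + t + 1) = 0 from if_pos hx]
        linarith
    · refine ⟨e + t + 1, by push_cast; omega, fun z _ _ => by omega, ?_⟩
      have hgap := h.gap_add_potential_le hm hrun
      rw [show emptyInd U V (e + t + 1) = 1 from if_neg hx]
      linarith

theorem exists_le_mul_sum_emptyInd (hm : 2 ≤ m) {n : ℕ} (hU : Function.Periodic U n)
    (hV : Function.Periodic V n) :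
    ∃ e : ℤ, (n : ℤ) ≤ 4 * m * ∑ j ∈ Finset.range n, emptyInd U V (e + j + 1) := by
  obtain ⟨e, he⟩ : ∃ e, ¬ (U e ∨ V e) := by
    by_contra! hall
    exact h.not_occ_after_run (a := 0) (fun x _ _ => hall x) (by omega) (hall _)
  obtain ⟨y, hyn, hrun, hbound⟩ := h.exists_run_potential_bound hm e n
  have hen : ¬ (U (e + n) ∨ V (e + n)) := by rwa [hU, hV]
  obtain rfl : y = e + n := by
    by_contra hne
    exact hen (hrun _ (by omega) (by omega))
  rw [potential_periodic hV] at hbound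
  exact ⟨e, by linarith⟩

end IsIndepLift

end Lift

theorem sum_range_add_natCast {M : Type*} [AddCommMonoid M] {n : ℕ} [NeZero n] (f : ZMod n → M)
    (a : ZMod n) : ∑ j ∈ Finset.range n, f (a + j) = ∑ z, f z := by
  refine Finset.sum_nbij' (fun j => a + j) (fun z => (z - a).val) (by simp) (by simp [ZMod.val_lt])
    (fun j hj => ?_) (by simp) (by simp)
  simp only [add_sub_cancel_left, ZMod.val_natCast]
  exact Nat.mod_eq_of_lt (Finset.mem_range.mp hj)

section Graph

variable {n k : ℕ} {s : Finset (ZMod n ⊕ ZMod n)}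

theorem P_adj_u_succ [Nontrivial (ZMod n)] (i : ZMod n) : (P n k).Adj (u n i) (u n (i + 1)) := by
  simp [P, u, adjFun]

theorem P_adj_u_v (i : ZMod n) : (P n k).Adj (u n i) (v n i) := by
  simp [P, u, v, adjFun]

theorem P_adj_v_add (hk : (k : ZMod n) ≠ 0) (i : ZMod n) : (P n k).Adj (v n i) (v n (i + k)) := by
  simp [P, v, adjFun, hk]

theorem IsIndep.isIndepLift {m : ℕ} [Nontrivial (ZMod n)] (hs : IsIndep (P n (2 * m)) s)
    (hm : ((2 * m : ℕ) : ZMod n) ≠ 0) :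
    IsIndepLift (fun i : ℤ => u n i ∈ s) (fun i => v n i ∈ s) m where
  not_U_succ i hi hi' := hs _ hi _ (by simpa using hi') (P_adj_u_succ _)
  not_V_add i hi hi' := hs _ hi _ (by simpa using hi') (P_adj_v_add hm _)
  not_U_and_V i hi hi' := hs _ hi _ hi' (P_adj_u_v _)

theorem periodic_mem_lift (w : ZMod n → ZMod n ⊕ ZMod n) :
    Function.Periodic (fun i : ℤ => w i ∈ s) n := fun i => by simp

theorem IsIndep.card_add_sum_emptyInd [NeZero n] (hs : IsIndep (P n k) s) :
    (s.card : ℤ) + ∑ z, emptyInd (fun z => u n z ∈ s) (fun z => v n z ∈ s) z = n := by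
  have hcard :
      (s.card : ℤ) = ∑ z, ((if u n z ∈ s then 1 else 0) + (if v n z ∈ s then 1 else 0)) := by
    rw [Finset.sum_add_distrib]
    unfold u v
    rw [← Fintype.sum_sum_type (f := fun x => if x ∈ s then (1 : ℤ) else 0)]
    simp
  have hcol (z : ZMod n) : (if u n z ∈ s then 1 else 0) + (if v n z ∈ s then 1 else 0) +
      emptyInd (fun z => u n z ∈ s) (fun z => v n z ∈ s) z = (1 : ℤ) := by
    have := fun hu hv => hs _ hu _ hv (P_adj_u_v (k := k) z)
    unfold emptyInd
    split_ifs <;> tauto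
  rw [hcard, ← Finset.sum_add_distrib, Finset.sum_congr rfl fun z _ => hcol z]
  simp

theorem IsIndep.le_mul_sum_emptyInd {m : ℕ} [Fact (1 < n)] (hs : IsIndep (P n (2 * m)) s)
    (hm : 2 ≤ m) (hmn : 2 * m < n) :
    (n : ℤ) ≤ 4 * m * ∑ z, emptyInd (fun z => u n z ∈ s) (fun z => v n z ∈ s) z := by
  have hlift := hs.isIndepLift ((ZMod.natCast_eq_zero_iff _ _).not.mpr
    (Nat.not_dvd_of_pos_of_lt (by omega) hmn))
  obtain ⟨e, he⟩ := hlift.exists_le_mul_sum_emptyInd hm (periodic_mem_lift (u n))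
    (periodic_mem_lift (v n))
  refine he.trans_eq ?_
  rw [← sum_range_add_natCast _ ((e + 1 : ℤ) : ZMod n)]
  refine congrArg _ (Finset.sum_congr rfl fun j _ => ?_)
  change emptyInd (fun z => u n z ∈ s) (fun z => v n z ∈ s) ((e + j + 1 : ℤ) : ZMod n) = _
  push_cast
  ring_nf

end Graph

/-- For every even `k > 2` and every `n > 2k`,
`α(P(n,k)) ≤ ⌊(2k−1)n/(2k)⌋`. -/
theorem alpha_upper_bound (n k : ℕ) (hke : Even k) (hk : 2 < k) (hn : 2 * k < n) :
    alpha n k ≤ (2 * k - 1) * n / (2 * k) := by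
  obtain ⟨m, rfl⟩ := hke
  rw [← two_mul] at *
  have : Fact (1 < n) := ⟨by omega⟩
  refine csSup_le' ?_
  rintro _ ⟨s, hs, rfl⟩
  rw [Nat.le_div_iff_mul_le (by omega)]
  have hempty := hs.le_mul_sum_emptyInd (by omega) (by omega)
  have hcols := hs.card_add_sum_emptyInd
  zify [(by omega : 1 ≤ 2 * (2 * m))]
  nlinarith

end GP
end

section
/- Let k ≥ 2 be an even integer and n ≥ 3k an integer, and fix an index t. The set S_t = {u_{t+2j} : 0 ≤ j ≤ k/2−1} ∪ {v_{t+2j+1} : 0 ≤ j ≤ k/2−1} ∪ {u_{t+k+2j+1} : 0 ≤ j ≤ k/2−1} ∪ {v_{t+k+2j} : 0 ≤ j ≤ k/2−1} (indices modulo n) is the unique independent set of size 2k in the subgraph of P(n,k) induced by the 2k-segment I_t. -/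
/-!
Encode `s ⊆ I_t` by its outer indices `A = {a < 2k : u_{t+a} ∈ s}` and inner indices
`B = {a < 2k : v_{t+a} ∈ s}`; as `n ≥ 3k`, no edge inside `I_t` wraps around. Independence says
that `A` and `B` are disjoint, `A` has no two consecutive indices and `B` no pair `{j, j+k}`, so
`A` meets each pair `{2i, 2i+1}` at most once and `B` each pair `{j, j+k}` at most once. Thus
`|A|, |B| ≤ k`, and `|s| = 2k` makes everything sharp: `A ∪ B` is all of `[0, 2k)` and every
pair is met exactly once. An odd `2i+1 < k` in `A` would propagate to `2i+3, …, 2i+1+k ∈ A`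
(as `2i+2 ∉ A`), leaving the pair `{2i+1, 2i+1+k}` outside `B`. So `A` holds the even indices
below `k`, and the pairs `{j, j+k}` force the rest.
-/

namespace GP

/-- The set `S_t` of Lemma 1 (Figure 1): the unique maximum independent set of `G[I_t]`. -/
def St (n k : ℕ) (t : ZMod n) : Finset (ZMod n ⊕ ZMod n) :=
  ((Finset.range (k / 2)).image fun j : ℕ => u n (t + ((2 * j : ℕ) : ZMod n))) ∪
  ((Finset.range (k / 2)).image fun j : ℕ => v n (t + ((2 * j + 1 : ℕ) : ZMod n))) ∪
  ((Finset.range (k / 2)).image fun j : ℕ => u n (t + ((k + 2 * j + 1 : ℕ) : ZMod n))) ∪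
  ((Finset.range (k / 2)).image fun j : ℕ => v n (t + ((k + 2 * j : ℕ) : ZMod n)))

open Finset

variable {n k : ℕ}

lemma add_natCast_inj (t : ZMod n) {a b : ℕ} (ha : a < n) (hb : b < n) :
    t + (a : ZMod n) = t + b ↔ a = b := by
  rw [add_right_inj, ZMod.natCast_eq_natCast_iff', Nat.mod_eq_of_lt ha, Nat.mod_eq_of_lt hb]

lemma add_natCast_add_natCast (t : ZMod n) (a c : ℕ) :
    t + (a : ZMod n) + c = t + ((a + c : ℕ) : ZMod n) := by
  push_cast; ring

section Adjacency

variable (t : ZMod n) {a b : ℕ}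

lemma adj_u_u_iff (ha : a + 1 < n) (hb : b + 1 < n) :
    (P n k).Adj (u n (t + a)) (u n (t + b)) ↔ b = a + 1 ∨ a = b + 1 := by
  simp only [P, SimpleGraph.fromRel_adj, u, adjFun, ne_eq, Sum.inl.injEq]
  rw [← Nat.cast_one, add_natCast_add_natCast, add_natCast_add_natCast,
    add_natCast_inj t (by omega) (by omega), add_natCast_inj t (by omega) hb,
    add_natCast_inj t (by omega) ha]
  omega

lemma adj_u_v_iff (ha : a < n) (hb : b < n) :
    (P n k).Adj (u n (t + a)) (v n (t + b)) ↔ a = b := by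
  simp only [P, SimpleGraph.fromRel_adj, u, v, adjFun, ne_eq, reduceCtorEq, not_false_eq_true,
    true_and, or_false]
  rw [add_natCast_inj t hb ha, eq_comm]

lemma adj_v_v_iff (hk : k ≠ 0) (ha : a + k < n) (hb : b + k < n) :
    (P n k).Adj (v n (t + a)) (v n (t + b)) ↔ b = a + k ∨ a = b + k := by
  simp only [P, SimpleGraph.fromRel_adj, v, adjFun, ne_eq, Sum.inr.injEq]
  rw [add_natCast_add_natCast, add_natCast_add_natCast,
    add_natCast_inj t (by omega) (by omega), add_natCast_inj t (by omega) hb,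
    add_natCast_inj t (by omega) ha]
  omega

end Adjacency

section Segment

variable {t : ZMod n} {s s' : Finset (ZMod n ⊕ ZMod n)} {a : ℕ}

lemma mem_segment_iff {x : ZMod n ⊕ ZMod n} :
    x ∈ segment n k t ↔ ∃ a < 2 * k, x = u n (t + a) ∨ x = v n (t + a) := by
  simp only [segment, mem_union, mem_image, mem_range]
  constructor
  · rintro (⟨a, ha, rfl⟩ | ⟨a, ha, rfl⟩)
    exacts [⟨a, ha, .inl rfl⟩, ⟨a, ha, .inr rfl⟩]
  · rintro ⟨a, ha, rfl | rfl⟩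
    exacts [.inl ⟨a, ha, rfl⟩, .inr ⟨a, ha, rfl⟩]

def outerIndices (n k : ℕ) (t : ZMod n) (s : Finset (ZMod n ⊕ ZMod n)) : Finset ℕ :=
  (range (2 * k)).filter fun a => u n (t + a) ∈ s

def innerIndices (n k : ℕ) (t : ZMod n) (s : Finset (ZMod n ⊕ ZMod n)) : Finset ℕ :=
  (range (2 * k)).filter fun a => v n (t + a) ∈ s

lemma mem_outerIndices : a ∈ outerIndices n k t s ↔ a < 2 * k ∧ u n (t + a) ∈ s := by
  simp [outerIndices]

lemma mem_innerIndices : a ∈ innerIndices n k t s ↔ a < 2 * k ∧ v n (t + a) ∈ s := by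
  simp [innerIndices]

lemma eq_of_outerIndices_eq_of_innerIndices_eq (hs : s ⊆ segment n k t)
    (hs' : s' ⊆ segment n k t) (hout : outerIndices n k t s = outerIndices n k t s')
    (hin : innerIndices n k t s = innerIndices n k t s') : s = s' := by
  have key : ∀ x ∈ segment n k t, x ∈ s ↔ x ∈ s' := by
    intro x hx
    obtain ⟨a, ha, rfl | rfl⟩ := mem_segment_iff.1 hx
    · simpa [mem_outerIndices, ha] using Finset.ext_iff.1 hout a
    · simpa [mem_innerIndices, ha] using Finset.ext_iff.1 hin a
  ext x
  exact ⟨fun h => (key x (hs h)).1 h, fun h => (key x (hs' h)).2 h⟩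

lemma card_eq_card_outerIndices_add_card_innerIndices (hn : 2 * k ≤ n)
    (hs : s ⊆ segment n k t) :
    #s = #(outerIndices n k t s) + #(innerIndices n k t s) := by
  have hdecomp : s = (outerIndices n k t s).image (fun a : ℕ => u n (t + a)) ∪
      (innerIndices n k t s).image (fun a : ℕ => v n (t + a)) := by
    ext x
    simp only [mem_union, mem_image, mem_outerIndices, mem_innerIndices]
    constructor
    · intro hx
      obtain ⟨a, ha, rfl | rfl⟩ := mem_segment_iff.1 (hs hx)
      exacts [.inl ⟨a, ⟨ha, hx⟩, rfl⟩, .inr ⟨a, ⟨ha, hx⟩, rfl⟩]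
    · rintro (⟨a, ⟨-, hx⟩, rfl⟩ | ⟨a, ⟨-, hx⟩, rfl⟩) <;> exact hx
  conv_lhs => rw [hdecomp]
  rw [card_union_of_disjoint (by simp [disjoint_left, u, v]),
    card_image_of_injOn fun a ha b hb h => ?_, card_image_of_injOn fun a ha b hb h => ?_]
  · rw [mem_coe, mem_innerIndices] at ha hb
    exact (add_natCast_inj t (by omega) (by omega)).1 (Sum.inr_injective h)
  · rw [mem_coe, mem_outerIndices] at ha hb
    exact (add_natCast_inj t (by omega) (by omega)).1 (Sum.inl_injective h)

end Segment

section Combinatorics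

variable {k : ℕ} {A B : Finset ℕ}

lemma injOn_div_two_of_forall_succ_notMem (h : ∀ a ∈ A, a + 1 ∉ A) :
    Set.InjOn (· / 2) A := by
  intro a ha b hb hab
  simp only at hab
  by_contra hne
  rcases Nat.lt_or_gt_of_ne hne with hlt | hlt
  · exact h a ha (by rwa [show a + 1 = b by omega])
  · exact h b hb (by rwa [show b + 1 = a by omega])

lemma injOn_fold_of_forall_add_notMem (hB : B ⊆ range (2 * k)) (h : ∀ b ∈ B, b + k ∉ B) :
    Set.InjOn (fun b => if b < k then b else b - k) B := by
  intro a ha b hb hab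
  have ha' := mem_range.1 (hB ha)
  have hb' := mem_range.1 (hB hb)
  simp only at hab
  by_contra hne
  split_ifs at hab with hak hbk
  · exact hne hab
  · exact h a ha (by rwa [show a + k = b by omega])
  · exact h b hb (by rwa [show b + k = a by omega])
  · omega

lemma mapsTo_div_two : Set.MapsTo (· / 2) (range (2 * k) : Set ℕ) (range k) := by
  intro a ha
  simp only [coe_range, Set.mem_Iio] at ha ⊢
  omega

lemma mapsTo_fold :
    Set.MapsTo (fun b => if b < k then b else b - k) (range (2 * k) : Set ℕ) (range k) := by
  intro a ha
  simp only [coe_range, Set.mem_Iio] at ha ⊢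
  split_ifs <;> omega

lemma card_le_of_forall_succ_notMem (hA : A ⊆ range (2 * k)) (h : ∀ a ∈ A, a + 1 ∉ A) :
    #A ≤ k := by
  simpa using card_le_card_of_injOn _ (mapsTo_div_two.mono_left (coe_subset.2 hA))
    (injOn_div_two_of_forall_succ_notMem h)

lemma card_le_of_forall_add_notMem (hB : B ⊆ range (2 * k)) (h : ∀ b ∈ B, b + k ∉ B) :
    #B ≤ k := by
  simpa using card_le_card_of_injOn _ (mapsTo_fold.mono_left (coe_subset.2 hB))
    (injOn_fold_of_forall_add_notMem hB h)

lemma mem_or_succ_mem_of_card_eq (hA : A ⊆ range (2 * k)) (h : ∀ a ∈ A, a + 1 ∉ A)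
    (hcard : #A = k) {i : ℕ} (hi : i < k) : 2 * i ∈ A ∨ 2 * i + 1 ∈ A := by
  obtain ⟨a, ha, hai⟩ := surjOn_of_injOn_of_card_le _
    (mapsTo_div_two.mono_left (coe_subset.2 hA)) (injOn_div_two_of_forall_succ_notMem h)
    (by simp [hcard]) (mem_coe.2 (mem_range.2 hi))
  simp only at hai
  obtain h | h : 2 * i = a ∨ 2 * i + 1 = a := by omega
  exacts [.inl (h ▸ ha), .inr (h ▸ ha)]

lemma mem_or_add_mem_of_card_eq (hB : B ⊆ range (2 * k)) (h : ∀ b ∈ B, b + k ∉ B)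
    (hcard : #B = k) {j : ℕ} (hj : j < k) : j ∈ B ∨ j + k ∈ B := by
  obtain ⟨b, hb, hbj⟩ := surjOn_of_injOn_of_card_le _
    (mapsTo_fold.mono_left (coe_subset.2 hB)) (injOn_fold_of_forall_add_notMem hB h)
    (by simp [hcard]) (mem_coe.2 (mem_range.2 hj))
  have hb' := mem_range.1 (hB hb)
  simp only at hbj
  split_ifs at hbj
  exacts [.inl (hbj ▸ hb), .inr (by rwa [show j + k = b by omega])]

lemma iff_mod_two_eq_zero_iff_lt (hk : Even k) {p : ℕ → Prop} (hsucc : ∀ a, p a → ¬p (a + 1))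
    (hpair : ∀ i < k, p (2 * i) ∨ p (2 * i + 1)) (hshift : ∀ j < k, ¬p (j + k) ↔ p j)
    {a : ℕ} (ha : a < 2 * k) : p a ↔ (a % 2 = 0 ↔ a < k) := by
  obtain ⟨m, rfl⟩ := hk
  have hchain : ∀ d i, i + d < m + m → p (2 * i + 1) → p (2 * (i + d) + 1) := by
    intro d
    induction d with
    | zero => intro i _ h; simpa using h
    | succ d ih =>
      intro i hid h
      have hnext := (hpair (i + d + 1) (by omega)).resolve_left (hsucc _ (ih i (by omega) h))
      rwa [show 2 * (i + (d + 1)) + 1 = 2 * (i + d + 1) + 1 by ring]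
  have hodd : ∀ i, 2 * i + 1 < m + m → ¬p (2 * i + 1) := fun i hi h =>
    (hshift (2 * i + 1) hi).2 h (by
      rw [show 2 * i + 1 + (m + m) = 2 * (i + m) + 1 by ring]
      exact hchain m i (by omega) h)
  have hlow : ∀ a < m + m, p a ↔ a % 2 = 0 := by
    intro a ha
    obtain ⟨i, rfl | rfl⟩ := Nat.even_or_odd' a
    · exact iff_of_true ((hpair i (by omega)).resolve_right (hodd i (by omega))) (by omega)
    · exact iff_of_false (hodd i ha) (by omega)
  rcases lt_or_ge a (m + m) with h | h
  · rw [hlow a h]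
    simp [h]
  · obtain ⟨j, rfl⟩ := Nat.exists_eq_add_of_le' h
    rw [← not_iff_not, hshift j (by omega), hlow j (by omega)]
    omega

theorem eq_filter_of_card_add_card_eq (hk : Even k) (hA : A ⊆ range (2 * k))
    (hB : B ⊆ range (2 * k)) (hAB : Disjoint A B) (hsucc : ∀ a ∈ A, a + 1 ∉ A)
    (hshift : ∀ b ∈ B, b + k ∉ B) (hcard : #A + #B = 2 * k) :
    A = (range (2 * k)).filter (fun a => a % 2 = 0 ↔ a < k) ∧
      B = (range (2 * k)).filter (fun a => ¬(a % 2 = 0 ↔ a < k)) := by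
  have hAk := card_le_of_forall_succ_notMem hA hsucc
  have hBk := card_le_of_forall_add_notMem hB hshift
  have hcover : A ∪ B = range (2 * k) := eq_of_subset_of_card_le (union_subset hA hB)
    (by rw [card_union_of_disjoint hAB, card_range, hcard])
  have hmemB : ∀ a < 2 * k, a ∈ B ↔ a ∉ A := fun a ha =>
    ⟨fun h => disjoint_right.1 hAB h, (mem_union.1 (hcover ▸ mem_range.2 ha)).resolve_left⟩
  have hpattern : ∀ a < 2 * k, a ∈ A ↔ (a % 2 = 0 ↔ a < k) :=
    fun a ha => iff_mod_two_eq_zero_iff_lt hk hsucc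
      (fun i hi => mem_or_succ_mem_of_card_eq hA hsucc (by omega) hi)
      (fun j hj => by
        rw [← hmemB (j + k) (by omega), ← not_iff_not, ← hmemB j (by omega)]
        exact ⟨(mem_or_add_mem_of_card_eq hB hshift (by omega) hj).resolve_right,
          hshift j⟩) ha
  refine ⟨ext fun a => ?_, ext fun a => ?_⟩ <;> rw [mem_filter, mem_range] <;>
    by_cases ha : a < 2 * k
  · rw [hpattern a ha, and_iff_right ha]
  · exact iff_of_false (fun h => ha (mem_range.1 (hA h))) (fun h => ha h.1)
  · rw [hmemB a ha, hpattern a ha, and_iff_right ha]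
  · exact iff_of_false (fun h => ha (mem_range.1 (hB h))) (fun h => ha h.1)

end Combinatorics

section St

variable {t : ZMod n} {a : ℕ}

lemma St_subset_segment : St n k t ⊆ segment n k t := by
  intro x hx
  simp only [St, mem_union, mem_image, mem_range] at hx
  rcases hx with (((⟨j, hj, rfl⟩ | ⟨j, hj, rfl⟩) | ⟨j, hj, rfl⟩) | ⟨j, hj, rfl⟩)
  · exact mem_segment_iff.2 ⟨_, by omega, .inl rfl⟩
  · exact mem_segment_iff.2 ⟨_, by omega, .inr rfl⟩
  · exact mem_segment_iff.2 ⟨_, by omega, .inl rfl⟩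
  · exact mem_segment_iff.2 ⟨_, by omega, .inr rfl⟩

lemma u_add_mem_St_iff (hk : Even k) (hn : 2 * k ≤ n) (ha : a < 2 * k) :
    u n (t + a) ∈ St n k t ↔ (a % 2 = 0 ↔ a < k) := by
  obtain ⟨m, rfl⟩ := hk
  simp only [St, mem_union, mem_image, mem_range, u, v, Sum.inl.injEq, reduceCtorEq, and_false,
    exists_false, or_false]
  constructor
  · rintro (⟨j, hj, he⟩ | ⟨j, hj, he⟩) <;> rw [add_natCast_inj t (by omega) (by omega)] at he <;>
      omega
  · intro h
    by_cases hak : a < m + m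
    · exact .inl ⟨a / 2, by omega, by rw [add_natCast_inj t (by omega) (by omega)]; omega⟩
    · exact .inr ⟨(a - (m + m)) / 2, by omega,
        by rw [add_natCast_inj t (by omega) (by omega)]; omega⟩

lemma v_add_mem_St_iff (hk : Even k) (hn : 2 * k ≤ n) (ha : a < 2 * k) :
    v n (t + a) ∈ St n k t ↔ ¬(a % 2 = 0 ↔ a < k) := by
  obtain ⟨m, rfl⟩ := hk
  simp only [St, mem_union, mem_image, mem_range, u, v, Sum.inr.injEq, reduceCtorEq, and_false,
    exists_false, or_false, false_or]
  constructor
  · rintro (⟨j, hj, he⟩ | ⟨j, hj, he⟩) <;> rw [add_natCast_inj t (by omega) (by omega)] at he <;>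
      omega
  · intro h
    by_cases hak : a < m + m
    · exact .inl ⟨a / 2, by omega, by rw [add_natCast_inj t (by omega) (by omega)]; omega⟩
    · exact .inr ⟨(a - (m + m)) / 2, by omega,
        by rw [add_natCast_inj t (by omega) (by omega)]; omega⟩

lemma outerIndices_St (hk : Even k) (hn : 2 * k ≤ n) :
    outerIndices n k t (St n k t) = (range (2 * k)).filter (fun a => a % 2 = 0 ↔ a < k) := by
  ext a
  rw [mem_outerIndices, mem_filter, mem_range]
  exact and_congr_right (u_add_mem_St_iff hk hn)

lemma innerIndices_St (hk : Even k) (hn : 2 * k ≤ n) :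
    innerIndices n k t (St n k t) = (range (2 * k)).filter (fun a => ¬(a % 2 = 0 ↔ a < k)) := by
  ext a
  rw [mem_innerIndices, mem_filter, mem_range]
  exact and_congr_right (v_add_mem_St_iff hk hn)

lemma card_St (hk : Even k) (hn : 2 * k ≤ n) : #(St n k t) = 2 * k := by
  rw [card_eq_card_outerIndices_add_card_innerIndices hn St_subset_segment,
    outerIndices_St hk hn, innerIndices_St hk hn, card_filter_add_card_filter_not, card_range]

lemma isIndep_St (hk : Even k) (hn : 3 * k ≤ n) : IsIndep (P n k) (St n k t) := by
  obtain ⟨m, hm⟩ := id hk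
  intro x hx y hy
  obtain ⟨a, ha, rfl | rfl⟩ := mem_segment_iff.1 (St_subset_segment hx) <;>
  obtain ⟨b, hb, rfl | rfl⟩ := mem_segment_iff.1 (St_subset_segment hy)
  · rw [u_add_mem_St_iff hk (by omega) ha] at hx
    rw [u_add_mem_St_iff hk (by omega) hb] at hy
    rw [adj_u_u_iff t (by omega) (by omega)]
    omega
  · rw [u_add_mem_St_iff hk (by omega) ha] at hx
    rw [v_add_mem_St_iff hk (by omega) hb] at hy
    rw [adj_u_v_iff t (by omega) (by omega)]
    omega
  · rw [v_add_mem_St_iff hk (by omega) ha] at hx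
    rw [u_add_mem_St_iff hk (by omega) hb] at hy
    rw [SimpleGraph.adj_comm, adj_u_v_iff t (by omega) (by omega)]
    omega
  · rw [v_add_mem_St_iff hk (by omega) ha] at hx
    rw [v_add_mem_St_iff hk (by omega) hb] at hy
    rw [adj_v_v_iff t (by omega) (by omega) (by omega)]
    omega

lemma eq_St_of_isIndep (hk : Even k) (hn : 3 * k ≤ n) {s : Finset (ZMod n ⊕ ZMod n)}
    (hs : s ⊆ segment n k t) (hI : IsIndep (P n k) s) (hcard : #s = 2 * k) : s = St n k t := by
  have hdisj : Disjoint (outerIndices n k t s) (innerIndices n k t s) := by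
    refine disjoint_left.2 fun a ha hb => ?_
    rw [mem_outerIndices] at ha
    rw [mem_innerIndices] at hb
    exact hI _ ha.2 _ hb.2 ((adj_u_v_iff t (by omega) (by omega)).2 rfl)
  have hsucc : ∀ a ∈ outerIndices n k t s, a + 1 ∉ outerIndices n k t s := by
    intro a ha ha'
    rw [mem_outerIndices] at ha ha'
    exact hI _ ha.2 _ ha'.2 ((adj_u_u_iff t (by omega) (by omega)).2 (.inl rfl))
  have hshift : ∀ b ∈ innerIndices n k t s, b + k ∉ innerIndices n k t s := by
    intro b hb hb'
    rw [mem_innerIndices] at hb hb'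
    exact hI _ hb.2 _ hb'.2 ((adj_v_v_iff t (by omega) (by omega) (by omega)).2 (.inl rfl))
  have h2k : 2 * k ≤ n := by omega
  obtain ⟨hout, hin⟩ := eq_filter_of_card_add_card_eq (A := outerIndices n k t s)
    (B := innerIndices n k t s) hk (filter_subset _ _) (filter_subset _ _) hdisj hsucc hshift
    (by rw [← card_eq_card_outerIndices_add_card_innerIndices h2k hs, hcard])
  exact eq_of_outerIndices_eq_of_innerIndices_eq hs St_subset_segment
    (hout.trans (outerIndices_St hk h2k).symm) (hin.trans (innerIndices_St hk h2k).symm)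

end St

theorem segment_unique_alpha_set_general (n k : ℕ) (hke : Even k) (hn : 3 * k ≤ n)
    (t : ZMod n) (s : Finset (ZMod n ⊕ ZMod n)) (hsub : s ⊆ segment n k t) :
    (IsIndep (P n k) s ∧ s.card = 2 * k) ↔ s = St n k t := by
  constructor
  · rintro ⟨hI, hcard⟩
    exact eq_St_of_isIndep hke hn hsub hI hcard
  · rintro rfl
    exact ⟨isIndep_St hke hn, card_St hke (by omega)⟩

/-- For even `k ≥ 2` and `n ≥ 3k`, `S_t` is the unique independent set of
size `2k` inside the `2k`-segment `I_t`. -/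
theorem segment_unique_alpha_set (n k : ℕ) (hke : Even k) (hk : 2 ≤ k) (hn : 3 * k ≤ n)
    (t : ZMod n) (s : Finset (ZMod n ⊕ ZMod n)) (hsub : s ⊆ segment n k t) :
    (IsIndep (P n k) s ∧ s.card = 2 * k) ↔ s = St n k t :=
  segment_unique_alpha_set_general n k hke hn t s hsub

end GP
end

section
/- Let k ≥ 2 be an even integer, n ≥ 3k an integer, and let S be a maximum independent set of P(n,k). Suppose the 2k-segment I_t satisfies |I_t ∩ S| = 2k−1, u_t ∉ S, and {u_t} ∪ (I_t ∩ S) is an independent set in the subgraph of P(n,k) induced by I_t. Then u_{t+2k} ∉ S and v_{t+2k} ∉ S (indices modulo n). -/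
/-!
`T = {u_t} ∪ (I_t ∩ S)` is an independent set of `2k` vertices inside `I_t`, so it contains exactly
one end of each spoke `u_{t+j} v_{t+j}`. As `v_{t+j}` and `v_{t+j+k}` are adjacent, `T` contains
`u_{t+j}` or `u_{t+j+k}` for every `j < k`; as consecutive outer vertices are adjacent, starting from
`u_t ∈ T` this forces `u_{t+j} ∈ T` for even `j` and `u_{t+j+k} ∈ T` for odd `j`. For even `k` this
puts `u_{t+2k-1}` and (since `u_{t+k+1} ∈ T`) `v_{t+k}` into `S`, and they are the neighbours of
`u_{t+2k}` and `v_{t+2k}`.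
-/

open Finset

namespace GP

theorem IsIndep.mem_or_mem_of_card_le {V ι : Type*} [DecidableEq V] [DecidableEq ι]
    {G : SimpleGraph V} {s : Finset V} {I : Finset ι} {a b : ι → V} (hs : IsIndep G s)
    (hab : ∀ i ∈ I, G.Adj (a i) (b i)) (hsub : s ⊆ I.biUnion fun i => {a i, b i})
    (hcard : I.card ≤ s.card) : ∀ i ∈ I, a i ∈ s ∨ b i ∈ s := by
  intro i hi
  by_contra! hmiss
  have hsub' : s ⊆ (I.erase i).biUnion fun j => s ∩ {a j, b j} := by
    intro x hx
    obtain ⟨j, hj, hxj⟩ := mem_biUnion.mp (hsub hx)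
    have hji : j ≠ i := by
      rintro rfl
      rcases mem_insert.mp hxj with rfl | hxb
      exacts [hmiss.1 hx, hmiss.2 (mem_singleton.mp hxb ▸ hx)]
    exact mem_biUnion.mpr ⟨j, mem_erase.mpr ⟨hji, hj⟩, mem_inter.mpr ⟨hx, hxj⟩⟩
  have hedge : ∀ j ∈ I.erase i, (s ∩ {a j, b j}).card ≤ 1 := by
    intro j hj
    have hadj := hab j (mem_of_mem_erase hj)
    refine card_le_one.mpr fun x hx y hy => ?_
    simp only [mem_inter, mem_insert, mem_singleton] at hx hy
    rcases hx with ⟨hx, rfl | rfl⟩ <;> rcases hy with ⟨hy, rfl | rfl⟩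
    exacts [rfl, (hs _ hx _ hy hadj).elim, (hs _ hy _ hx hadj).elim, rfl]
  have := (card_le_card hsub').trans (card_biUnion_le_card_mul _ _ 1 hedge)
  have := card_pos.mpr ⟨i, hi⟩
  rw [card_erase_of_mem hi] at *
  omega

theorem even_and_odd_add_of_cover {X : ℕ → Prop} {k : ℕ} (h0 : X 0)
    (hstep : ∀ j, X j → ¬ X (j + 1)) (hcover : ∀ j < k, X j ∨ X (j + k)) :
    ∀ j < k, (Even j → X j) ∧ (Odd j → X (j + k)) := by
  intro j
  induction j with
  | zero => exact fun _ => ⟨fun _ => h0, fun h => absurd h Nat.not_odd_zero⟩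
  | succ j ih =>
    intro hj
    obtain ⟨ihEven, ihOdd⟩ := ih (by omega)
    rcases Nat.even_or_odd j with hjEven | hjOdd
    · exact ⟨fun h => absurd hjEven (Nat.even_add_one.mp h),
        fun _ => (hcover (j + 1) hj).resolve_left (hstep j (ihEven hjEven))⟩
    · have hnot : ¬ X (j + 1 + k) := add_right_comm j 1 k ▸ hstep _ (ihOdd hjOdd)
      exact ⟨fun _ => (hcover (j + 1) hj).resolve_right hnot,
        fun h => absurd hjOdd (Nat.odd_add_one.mp h)⟩

lemma natCast_ne_zero_of_lt {n m : ℕ} (h0 : 0 < m) (hm : m < n) : (m : ZMod n) ≠ 0 := by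
  rw [Ne, ZMod.natCast_eq_zero_iff]
  exact Nat.not_dvd_of_pos_of_lt h0 hm

lemma adj_u_u_add_one {n : ℕ} (k : ℕ) (h1 : (1 : ZMod n) ≠ 0) (i : ZMod n) :
    (P n k).Adj (u n i) (u n (i + 1)) := by
  rw [P, SimpleGraph.fromRel_adj]
  exact ⟨by simpa [u] using h1, Or.inl rfl⟩

lemma adj_v_v_add {n k : ℕ} (hk : (k : ZMod n) ≠ 0) (i : ZMod n) :
    (P n k).Adj (v n i) (v n (i + k)) := by
  rw [P, SimpleGraph.fromRel_adj]
  exact ⟨by simpa [v] using hk, Or.inl rfl⟩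

lemma adj_u_v (n k : ℕ) (i : ZMod n) : (P n k).Adj (u n i) (v n i) := by
  rw [P, SimpleGraph.fromRel_adj]
  exact ⟨by simp [u, v], Or.inl rfl⟩

lemma segment_eq_biUnion (n k : ℕ) (t : ZMod n) :
    segment n k t = (range (2 * k)).biUnion fun j : ℕ => {u n (t + j), v n (t + j)} := by
  ext x
  simp only [segment, mem_union, mem_image, mem_biUnion, mem_insert, mem_singleton]
  constructor
  · rintro (⟨j, hj, rfl⟩ | ⟨j, hj, rfl⟩)
    exacts [⟨j, hj, Or.inl rfl⟩, ⟨j, hj, Or.inr rfl⟩]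
  · rintro ⟨j, hj, rfl | rfl⟩
    exacts [Or.inl ⟨j, hj, rfl⟩, Or.inr ⟨j, hj, rfl⟩]

section SegmentPattern

variable {n k : ℕ} {t : ZMod n} {T : Finset (ZMod n ⊕ ZMod n)}

lemma mem_or_mem_of_subset_segment (hT : IsIndep (P n k) T) (hTseg : T ⊆ segment n k t)
    (hcard : 2 * k ≤ T.card) : ∀ j < 2 * k, u n (t + j) ∈ T ∨ v n (t + j) ∈ T := by
  intro j hj
  refine hT.mem_or_mem_of_card_le (a := fun i : ℕ => u n (t + i)) (b := fun i : ℕ => v n (t + i))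
    (fun i _ => adj_u_v n k _) ?_ ?_ j (mem_range.mpr hj)
  · rwa [← segment_eq_biUnion]
  · rwa [card_range]

lemma outer_mem_of_subset_segment (h1 : (1 : ZMod n) ≠ 0) (hk : (k : ZMod n) ≠ 0)
    (hT : IsIndep (P n k) T) (hTseg : T ⊆ segment n k t) (hcard : 2 * k ≤ T.card)
    (ht : u n t ∈ T) :
    ∀ j < k, (Even j → u n (t + j) ∈ T) ∧ (Odd j → u n (t + (j + k : ℕ)) ∈ T) := by
  have hcol := mem_or_mem_of_subset_segment hT hTseg hcard
  refine even_and_odd_add_of_cover (X := fun j : ℕ => u n (t + j) ∈ T) (by simpa using ht)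
    (fun j hj hj1 => hT _ hj _ (by simpa [add_assoc] using hj1) (adj_u_u_add_one k h1 _))
    (fun j hj => ?_)
  refine (hcol j (by omega)).imp_right fun hv => ?_
  refine (hcol (j + k) (by omega)).resolve_right fun hvk => hT _ hv _ hvk ?_
  simpa [add_assoc] using adj_v_v_add hk (t + j)

lemma u_add_two_mul_sub_one_mem_and_v_add_mem (hke : Even k) (hk2 : 2 ≤ k)
    (h1 : (1 : ZMod n) ≠ 0) (hk : (k : ZMod n) ≠ 0) (hT : IsIndep (P n k) T)
    (hTseg : T ⊆ segment n k t) (hcard : 2 * k ≤ T.card) (ht : u n t ∈ T) :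
    u n (t + (2 * k - 1 : ℕ)) ∈ T ∧ v n (t + k) ∈ T := by
  have hpat := outer_mem_of_subset_segment h1 hk hT hTseg hcard ht
  have hlast := (hpat (k - 1) (by omega)).2 (Nat.Even.sub_odd (by omega) hke odd_one)
  have hk1 := (hpat 1 (by omega)).2 odd_one
  refine ⟨by rwa [show k - 1 + k = 2 * k - 1 by omega] at hlast, ?_⟩
  refine (mem_or_mem_of_subset_segment hT hTseg hcard k (by omega)).resolve_left fun hu => ?_
  exact hT _ hu _ (by simpa [add_comm 1 k, add_assoc] using hk1) (adj_u_u_add_one k h1 _)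

end SegmentPattern

theorem special_type2_neighbors_not_in_S_general (n k : ℕ) (hke : Even k) (hk : 2 ≤ k)
    (hn : 3 * k ≤ n) (S : Finset (ZMod n ⊕ ZMod n)) (hind : IsIndep (P n k) S)
    (t : ZMod n)
    (ht : (segment n k t ∩ S).card = 2 * k - 1)
    (hut : u n t ∉ S)
    (hspecial : IsIndep (P n k) (insert (u n t) (segment n k t ∩ S))) :
    u n (t + ((2 * k : ℕ) : ZMod n)) ∉ S ∧ v n (t + ((2 * k : ℕ) : ZMod n)) ∉ S := by
  have h1 : (1 : ZMod n) ≠ 0 := by simpa using natCast_ne_zero_of_lt (n := n) one_pos (by omega)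
  have hk0 : (k : ZMod n) ≠ 0 := natCast_ne_zero_of_lt (by omega) (by omega)
  have hcard : (insert (u n t) (segment n k t ∩ S)).card = 2 * k := by
    rw [card_insert_of_notMem fun h => hut (mem_inter.mp h).2, ht]
    omega
  have hseg : insert (u n t) (segment n k t ∩ S) ⊆ segment n k t := by
    refine insert_subset ?_ inter_subset_left
    rw [segment_eq_biUnion]
    exact mem_biUnion.mpr ⟨0, mem_range.mpr (by omega), by simp⟩
  have hS : ∀ x ∈ insert (u n t) (segment n k t ∩ S), x ≠ u n t → x ∈ S :=
    fun x hx hne => (mem_inter.mp ((mem_insert.mp hx).resolve_left hne)).2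
  obtain ⟨hu, hv⟩ := u_add_two_mul_sub_one_mem_and_v_add_mem hke hk h1 hk0 hspecial hseg
    hcard.ge (mem_insert_self _ _)
  have h2k1 : ((2 * k - 1 : ℕ) : ZMod n) ≠ 0 := natCast_ne_zero_of_lt (by omega) (by omega)
  have huS := hS _ hu (by simpa [u] using h2k1)
  have hvS := hS _ hv (by simp [u, v])
  refine ⟨fun h => hind _ huS _ h ?_, fun h => hind _ hvS _ h ?_⟩
  · rw [show 2 * k = 2 * k - 1 + 1 by omega, Nat.cast_succ, ← add_assoc]
    exact adj_u_u_add_one k h1 _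
  · rw [two_mul, Nat.cast_add, ← add_assoc]
    exact adj_v_v_add hk0 _

/-- If `S` is a maximum independent set of `P(n,k)` (`k ≥ 2` even, `n ≥ 3k`)
and `I_t` is of Special type 2 with respect to `S` (i.e. `|I_t ∩ S| = 2k−1`, `u_t ∉ S`, and
`{u_t} ∪ (I_t ∩ S)` is independent), then `u_{t+2k} ∉ S` and `v_{t+2k} ∉ S`. -/
theorem special_type2_neighbors_not_in_S (n k : ℕ) (hke : Even k) (hk : 2 ≤ k)
    (hn : 3 * k ≤ n) (S : Finset (ZMod n ⊕ ZMod n)) (hind : IsIndep (P n k) S)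
    (hmax : S.card = alpha n k) (t : ZMod n)
    (ht : (segment n k t ∩ S).card = 2 * k - 1)
    (hut : u n t ∉ S)
    (hspecial : IsIndep (P n k) (insert (u n t) (segment n k t ∩ S))) :
    u n (t + ((2 * k : ℕ) : ZMod n)) ∉ S ∧ v n (t + ((2 * k : ℕ) : ZMod n)) ∉ S :=
  special_type2_neighbors_not_in_S_general n k hke hk hn S hind t ht hut hspecial

end GP
end

section
/- Let n and k be even integers with k > 2 and n > 2k, and let r be the remainder of n modulo 2k. Then α(P(n,k)) ≥ (2k−1)⌊n/(2k)⌋ + r/2 if r ≤ k, and α(P(n,k)) ≥ (2k−1)⌊n/(2k)⌋ + 3r/2 − k − 1 if r > k. -/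
/-!
Cut the indices `0, …, n - 1` into `q = ⌊n / 2k⌋` blocks of length `2k` followed by one block of
length `r`. In a block of length `L` starting at `T`, put `a = (L - k) / 2` (so `a = 0` when
`L ≤ k`) and choose the outer vertices `u_{T+2j}` for `j < L/2 - a` and `u_{T+k+1+2j}` for
`j < a - 1`, and the inner vertices `v_{T+1+2j}` and `v_{T+k+2j}` for `j < a`. A full block thus
contributes `k - 1` outer and `k` inner vertices, the last one `r/2` in total if `r ≤ k` and
`3r/2 - k - 1` if `r > k`. An edge `u_i u_{i+1}` or `v_i v_{i+k}` moves at most one block forward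
or wraps around from the end to block `0`, and comparing offsets in each of these cases shows that
the chosen vertices are independent.
-/

namespace GP

open Finset

theorem card_le_indepNum {V : Type*} [Finite V] {G : SimpleGraph V} {s : Finset V}
    (hs : IsIndep G s) : s.card ≤ indepNum G := by
  have := Fintype.ofFinite V
  refine le_csSup ⟨Fintype.card V, ?_⟩ ⟨s, hs, rfl⟩
  rintro m ⟨t, -, rfl⟩
  exact t.card_le_univ

theorem eq_of_natCast_eq {n i j : ℕ} (hi : i < n) (hj : j < n) (h : (i : ZMod n) = j) :
    i = j := by
  simpa [ZMod.val_cast_of_lt hi, ZMod.val_cast_of_lt hj] using congrArg ZMod.val h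

theorem eq_mod_of_natCast_eq_add {n i j d : ℕ} (hj : j < n) (h : (j : ZMod n) = i + d) :
    j = (i + d) % n := by
  simpa [← Nat.cast_add, ZMod.val_natCast, Nat.mod_eq_of_lt hj] using congrArg ZMod.val h

theorem card_add_card_le_alpha {n k : ℕ} [NeZero n] {U W : Finset ℕ}
    (hU : ∀ i ∈ U, i < n) (hW : ∀ i ∈ W, i < n) (hUU : ∀ i ∈ U, (i + 1) % n ∉ U)
    (hUW : Disjoint U W) (hWW : ∀ i ∈ W, (i + k) % n ∉ W) :
    U.card + W.card ≤ alpha n k := by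
  have hinj {s : Finset ℕ} (hs : ∀ i ∈ s, i < n) : Set.InjOn (fun i : ℕ => (i : ZMod n)) s :=
    fun i hi j hj => eq_of_natCast_eq (hs i hi) (hs j hj)
  let S := U.image (fun i : ℕ => u n i) ∪ W.image (fun i : ℕ => v n i)
  have hcard : S.card = U.card + W.card := by
    rw [card_union_of_disjoint, card_image_of_injOn, card_image_of_injOn]
    · exact Sum.inr_injective.comp_injOn (hinj hW)
    · exact Sum.inl_injective.comp_injOn (hinj hU)
    · simp [disjoint_left, u, v]
  have hS : IsIndep (P n k) S := by
    intro x hx y hy hxy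
    simp only [S, mem_union, mem_image] at hx hy
    obtain ⟨-, hxy⟩ := (SimpleGraph.fromRel_adj _ _ _).1 hxy
    rcases hx with ⟨i, hi, rfl⟩ | ⟨i, hi, rfl⟩ <;> rcases hy with ⟨j, hj, rfl⟩ | ⟨j, hj, rfl⟩ <;>
      rcases hxy with hxy | hxy <;> simp only [u, v, adjFun] at hxy
    · exact hUU i hi (eq_mod_of_natCast_eq_add (d := 1) (hU j hj) (by simpa using hxy) ▸ hj)
    · exact hUU j hj (eq_mod_of_natCast_eq_add (d := 1) (hU i hi) (by simpa using hxy) ▸ hi)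
    · exact disjoint_left.1 hUW hi (eq_of_natCast_eq (hW j hj) (hU i hi) hxy ▸ hj)
    · exact disjoint_left.1 hUW hj (eq_of_natCast_eq (hW i hi) (hU j hj) hxy ▸ hi)
    · exact hWW i hi (eq_mod_of_natCast_eq_add (hW j hj) hxy ▸ hj)
    · exact hWW j hj (eq_mod_of_natCast_eq_add (hW i hi) hxy ▸ hi)
  exact hcard ▸ card_le_indepNum hS

theorem add_mod_eq_or {n i d : ℕ} (hi : i < n) (hd : d ≤ n) :
    (i + d) % n = i + d ∨ (i + d) % n + n = i + d := by
  rcases lt_or_ge (i + d) n with h | h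
  · exact .inl (Nat.mod_eq_of_lt h)
  · rw [Nat.mod_eq_sub_mod h, Nat.mod_eq_of_lt (by omega)]
    omega

theorem eq_or_succ_of_mul_add_eq {K A B x y : ℕ} (h : K * A + x = K * B + y)
    (hx : x < 2 * K) (hy : y < 2 * K) :
    (A = B ∧ x = y) ∨ (B = A + 1 ∧ x = y + K) ∨ (A = B + 1 ∧ y = x + K) := by
  wlog hAB : A ≤ B generalizing A B x y
  · have := this h.symm hy hx (by omega)
    omega
  obtain ⟨d, rfl⟩ := Nat.exists_eq_add_of_le hAB
  rw [mul_add] at h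
  have hd : d < 2 := Nat.lt_of_mul_lt_mul_left (a := K) (by omega)
  interval_cases d <;> omega

def arithProg (T m : ℕ) : Finset ℕ := (range m).image (T + 2 * ·)

theorem mem_arithProg {T m x : ℕ} : x ∈ arithProg T m ↔ ∃ j < m, x = T + 2 * j := by
  simp [arithProg, eq_comm]

theorem card_arithProg (T m : ℕ) : (arithProg T m).card = m :=
  (card_image_of_injective _ fun a b h => by simpa using h).trans (card_range m)

theorem card_biUnion_of_subset_Ico {L m : ℕ} {s : ℕ → Finset ℕ}
    (hs : ∀ t, s t ⊆ Ico (L * t) (L * t + L)) :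
    ((range m).biUnion s).card = ∑ t ∈ range m, (s t).card := by
  refine card_biUnion fun t₁ _ t₂ _ hne => disjoint_left.2 fun x h₁ h₂ => hne ?_
  have h₁ := mem_Ico.1 (hs t₁ h₁)
  have h₂ := mem_Ico.1 (hs t₂ h₂)
  rw [← Nat.div_eq_of_lt_le (m := x) (n := L) (k := t₁) (by linarith) (by linarith),
    Nat.div_eq_of_lt_le (m := x) (n := L) (k := t₂) (by linarith) (by linarith)]

theorem block_cases_of_add_mod_eq {K q r t₁ t₂ e₁ e₂ d : ℕ} (hq : 0 < q) (hr : r < K) (hd : d ≤ K)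
    (he₁ : e₁ < K) (he₂ : e₂ < K) (ht₁ : t₁ ≤ q) (hlt : K * t₁ + e₁ < K * q + r)
    (h : (K * t₁ + e₁ + d) % (K * q + r) = K * t₂ + e₂) :
    (t₂ = t₁ ∧ e₂ = e₁ + d) ∨ (t₂ = t₁ + 1 ∧ e₂ + K = e₁ + d) ∨
      (t₂ = 0 ∧ t₁ = q ∧ e₂ + r = e₁ + d) ∨ (t₂ = 0 ∧ t₁ + 1 = q ∧ e₂ + r + K = e₁ + d) := by
  have hKq : K ≤ K * q := Nat.le_mul_of_pos_right K hq
  have hlast : t₁ = q → e₁ < r := by rintro rfl; omega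
  rcases add_mod_eq_or hlt (d := d) (by omega) with h' | h' <;> rw [h] at h'
  · rcases eq_or_succ_of_mul_add_eq (K := K) (A := t₁) (B := t₂) (x := e₁ + d) (y := e₂)
      (by omega) (by omega) (by omega) with h | h | h <;> omega
  · rcases eq_or_succ_of_mul_add_eq (K := K) (A := t₂ + q) (B := t₁) (x := e₂ + r) (y := e₁ + d)
      (by rw [mul_add]; omega) (by omega) (by omega) with h | h | h <;> omega

section Construction

variable {k q r T L x : ℕ}

def outerBlock (k T L : ℕ) : Finset ℕ :=
  arithProg T (L / 2 - (L - k) / 2) ∪ arithProg (T + k + 1) ((L - k) / 2 - 1)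

def innerBlock (k T L : ℕ) : Finset ℕ :=
  arithProg (T + 1) ((L - k) / 2) ∪ arithProg (T + k) ((L - k) / 2)

theorem mem_outerBlock : x ∈ outerBlock k T L ↔
    ∃ j, (j < L / 2 - (L - k) / 2 ∧ x = T + 2 * j) ∨
      (j < (L - k) / 2 - 1 ∧ x = T + k + 1 + 2 * j) := by
  simp only [outerBlock, mem_union, mem_arithProg, exists_or]

theorem mem_innerBlock : x ∈ innerBlock k T L ↔
    ∃ j, j < (L - k) / 2 ∧ (x = T + 1 + 2 * j ∨ x = T + k + 2 * j) := by
  simp only [innerBlock, mem_union, mem_arithProg, ← exists_or, and_or_left]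

theorem outerBlock_subset_Ico : outerBlock k T L ⊆ Ico T (T + L) := fun x hx => by
  obtain ⟨j, hj⟩ := mem_outerBlock.1 hx
  rw [mem_Ico]
  omega

theorem innerBlock_subset_Ico : innerBlock k T L ⊆ Ico T (T + L) := fun x hx => by
  obtain ⟨j, hj⟩ := mem_innerBlock.1 hx
  rw [mem_Ico]
  omega

theorem card_outerBlock (hk : Even k) :
    (outerBlock k T L).card = L / 2 - (L - k) / 2 + ((L - k) / 2 - 1) := by
  obtain ⟨k, rfl⟩ := hk
  rw [outerBlock, card_union_of_disjoint, card_arithProg, card_arithProg]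
  refine disjoint_left.2 fun x h₁ h₂ => ?_
  obtain ⟨j₁, -, rfl⟩ := mem_arithProg.1 h₁
  obtain ⟨j₂, -, h⟩ := mem_arithProg.1 h₂
  omega

theorem card_innerBlock (hk : Even k) :
    (innerBlock k T L).card = (L - k) / 2 + (L - k) / 2 := by
  obtain ⟨k, rfl⟩ := hk
  rw [innerBlock, card_union_of_disjoint, card_arithProg, card_arithProg]
  refine disjoint_left.2 fun x h₁ h₂ => ?_
  obtain ⟨j₁, -, rfl⟩ := mem_arithProg.1 h₁
  obtain ⟨j₂, -, h⟩ := mem_arithProg.1 h₂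
  omega

def blockUnion (k q r : ℕ) (s : ℕ → ℕ → Finset ℕ) : Finset ℕ :=
  (range (q + 1)).biUnion fun t => s (2 * k * t) (if t < q then 2 * k else r)

variable {s : ℕ → ℕ → Finset ℕ}

theorem exists_of_mem_blockUnion (hs : ∀ T L, s T L ⊆ Ico T (T + L))
    (hx : x ∈ blockUnion k q r s) :
    ∃ t L e, t ≤ q ∧ (t < q ∧ L = 2 * k ∨ t = q ∧ L = r) ∧ e < L ∧ x = 2 * k * t + e ∧
      x ∈ s (2 * k * t) L := by
  obtain ⟨t, ht, hx⟩ := mem_biUnion.1 hx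
  have ht : t ≤ q := Nat.lt_succ_iff.1 (mem_range.1 ht)
  have hx' := mem_Ico.1 (hs _ _ hx)
  refine ⟨t, _, x - 2 * k * t, ht, ?_, by omega, by omega, hx⟩
  split_ifs <;> omega

theorem lt_of_mem_blockUnion (hs : ∀ T L, s T L ⊆ Ico T (T + L))
    (hx : x ∈ blockUnion k q r s) : x < 2 * k * q + r := by
  obtain ⟨t, L, e, -, ⟨htq, rfl⟩ | ⟨rfl, rfl⟩, he, rfl, -⟩ := exists_of_mem_blockUnion hs hx
  · have : 2 * k * (t + 1) ≤ 2 * k * q := Nat.mul_le_mul_left _ htq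
    rw [mul_add_one] at this
    omega
  · omega

theorem card_blockUnion (hs : ∀ T L, s T L ⊆ Ico T (T + L)) (hr : r ≤ 2 * k) :
    (blockUnion k q r s).card =
      ∑ t ∈ range q, (s (2 * k * t) (2 * k)).card + (s (2 * k * q) r).card := by
  rw [blockUnion, card_biUnion_of_subset_Ico (L := 2 * k), sum_range_succ, if_neg (lt_irrefl q)]
  · exact congrArg (· + _) (sum_congr rfl fun t ht => by rw [if_pos (mem_range.1 ht)])
  · intro t
    refine (hs _ _).trans (Ico_subset_Ico_right ?_)
    split_ifs <;> omega

def outerSet (k q r : ℕ) : Finset ℕ := blockUnion k q r (outerBlock k)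

def innerSet (k q r : ℕ) : Finset ℕ := blockUnion k q r (innerBlock k)

theorem card_outerSet (hk : Even k) (hr : r ≤ 2 * k) :
    (outerSet k q r).card = (k - 1) * q + (r / 2 - (r - k) / 2 + ((r - k) / 2 - 1)) := by
  rw [outerSet, card_blockUnion (fun _ _ => outerBlock_subset_Ico) hr]
  simp only [card_outerBlock hk, sum_const, card_range, smul_eq_mul]
  obtain ⟨k, rfl⟩ := hk
  rw [mul_comm]
  congr 2
  omega

theorem card_innerSet (hk : Even k) (hr : r ≤ 2 * k) :
    (innerSet k q r).card = k * q + ((r - k) / 2 + (r - k) / 2) := by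
  rw [innerSet, card_blockUnion (fun _ _ => innerBlock_subset_Ico) hr]
  simp only [card_innerBlock hk, sum_const, card_range, smul_eq_mul]
  obtain ⟨k, rfl⟩ := hk
  rw [mul_comm]
  congr 2
  omega

end Construction

section Independence

variable {k q r i : ℕ}

theorem succ_mod_not_mem_outerSet (hq : 0 < q) (hrk : r < 2 * k)
    (hi : i ∈ outerSet k q r) : (i + 1) % (2 * k * q + r) ∉ outerSet k q r := by
  intro hj
  have hlt := lt_of_mem_blockUnion (fun _ _ => outerBlock_subset_Ico) hi
  obtain ⟨t₁, L₁, e₁, ht₁, hL₁, he₁, rfl, hi⟩ :=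
    exists_of_mem_blockUnion (fun _ _ => outerBlock_subset_Ico) hi
  obtain ⟨t₂, L₂, e₂, -, hL₂, he₂, hj', hj⟩ :=
    exists_of_mem_blockUnion (fun _ _ => outerBlock_subset_Ico) hj
  obtain ⟨j₁, hj₁⟩ := mem_outerBlock.1 hi
  obtain ⟨j₂, hj₂⟩ := mem_outerBlock.1 hj
  rcases block_cases_of_add_mod_eq hq hrk (by omega) (by omega) (by omega) ht₁ hlt hj' with h | h | h | h <;>
    omega

theorem add_mod_not_mem_innerSet (hk : Even k) (hr : Even r) (hq : 0 < q) (hrk : r < 2 * k)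
    (hi : i ∈ innerSet k q r) : (i + k) % (2 * k * q + r) ∉ innerSet k q r := by
  intro hj
  have hlt := lt_of_mem_blockUnion (fun _ _ => innerBlock_subset_Ico) hi
  obtain ⟨t₁, L₁, e₁, ht₁, hL₁, he₁, rfl, hi⟩ :=
    exists_of_mem_blockUnion (fun _ _ => innerBlock_subset_Ico) hi
  obtain ⟨t₂, L₂, e₂, -, hL₂, he₂, hj', hj⟩ :=
    exists_of_mem_blockUnion (fun _ _ => innerBlock_subset_Ico) hj
  obtain ⟨j₁, hj₁⟩ := mem_innerBlock.1 hi
  obtain ⟨j₂, hj₂⟩ := mem_innerBlock.1 hj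
  have := Nat.even_iff.1 hk
  have := Nat.even_iff.1 hr
  rcases block_cases_of_add_mod_eq hq hrk (by omega) (by omega) (by omega) ht₁ hlt hj' with h | h | h | h <;>
    omega

theorem disjoint_outerSet_innerSet (hrk : r ≤ 2 * k) :
    Disjoint (outerSet k q r) (innerSet k q r) := by
  refine disjoint_left.2 fun x hu hv => ?_
  obtain ⟨t₁, L₁, e₁, -, hL₁, he₁, rfl, hu⟩ :=
    exists_of_mem_blockUnion (fun _ _ => outerBlock_subset_Ico) hu
  obtain ⟨t₂, L₂, e₂, -, hL₂, he₂, h, hv⟩ :=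
    exists_of_mem_blockUnion (fun _ _ => innerBlock_subset_Ico) hv
  obtain ⟨j₁, hj₁⟩ := mem_outerBlock.1 hu
  obtain ⟨j₂, hj₂⟩ := mem_innerBlock.1 hv
  rcases eq_or_succ_of_mul_add_eq h (by omega) (by omega) with h | h | h <;> omega

end Independence

/-- For even `n` and even `k > 2` with `n > 2k`, writing `r = n mod 2k`,
`α(P(n,k)) ≥ (2k−1)⌊n/(2k)⌋ + r/2` if `r ≤ k`, and
`α(P(n,k)) ≥ (2k−1)⌊n/(2k)⌋ + 3r/2 − k − 1` if `r > k`. -/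
theorem alpha_lower_bound_even_even (n k : ℕ) (hne : Even n) (hke : Even k)
    (hk : 2 < k) (hn : 2 * k < n) (r : ℕ) (hr : r = n % (2 * k)) :
    (r ≤ k → (2 * k - 1) * (n / (2 * k)) + r / 2 ≤ alpha n k) ∧
    (k < r → (2 * k - 1) * (n / (2 * k)) + (3 * r / 2 - k - 1) ≤ alpha n k) := by
  obtain ⟨q, hqn⟩ : ∃ q, n / (2 * k) = q := ⟨_, rfl⟩
  have hrk : r < 2 * k := hr ▸ Nat.mod_lt _ (by omega)
  have hnqr : n = 2 * k * q + r := by rw [← hqn, hr, Nat.div_add_mod]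
  subst hnqr
  rw [hqn]
  have hq : 0 < q := Nat.pos_of_ne_zero (by rintro rfl; simp at hn; omega)
  have hre : Even r := (Nat.even_add.1 hne).1 ((even_two_mul k).mul_right q)
  have : NeZero (2 * k * q + r) := ⟨by omega⟩
  have hle := card_add_card_le_alpha (k := k) (U := outerSet k q r) (W := innerSet k q r)
    (fun _ => lt_of_mem_blockUnion fun _ _ => outerBlock_subset_Ico)
    (fun _ => lt_of_mem_blockUnion fun _ _ => innerBlock_subset_Ico)
    (fun _ => succ_mod_not_mem_outerSet hq hrk) (disjoint_outerSet_innerSet hrk.le)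
    (fun _ => add_mod_not_mem_innerSet hke hre hq hrk)
  rw [card_outerSet hke hrk.le, card_innerSet hke hrk.le] at hle
  have : (2 * k - 1) * q = (k - 1) * q + k * q := by rw [← add_mul]; congr 1; omega
  have := Nat.even_iff.1 hke
  have := Nat.even_iff.1 hre
  constructor <;> intro <;> omega

end GP
end
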